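/- Let q be a real number, n ≥ 1 an integer, f : ℝ → ℝ twice continuously differentiable, and x a real number with 1+(q-1)x ≠ 0. Then the deformed Witt bracket relation holds at x: (D₀(Dₙf) - Dₙ(D₀f))(x) = n·(q²-q+1)·(Dₙf)(x) + (q²-q+1)·Σ_{k=1}^{n-1}(1-q)^k·(D_{n-k}f)(x) + (1-q)ⁿ·(D₀f)(x). -/

import Mathlib

/-!
Each operator is first order, `D₀ = a ∂` and `Dₙ = b ∂`, so `[D₀, Dₙ] = (a b' - b a') ∂`: the
second-derivative terms cancel and the theorem is an identity between coefficients.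
Writing `A = 1 + (x-1)q`, `B = 1 + (q-1)x`, `c = q² - q + 1` and `g = A / B`, one has
`g' = c / B²`, and `a b' - b a' = (n-1)·c·b + gⁿ⁻¹ A²`. The remaining sum comes from the
linear relation `B g = c x + (1-q) B`, which unrolls to
`B gⁿ = c x ∑ₖ (1-q)ᵏ gⁿ⁻¹⁻ᵏ + (1-q)ⁿ B` by the geometric sum formula.
-/

/-- The q-rational transition map. -/
noncomputable def gq (q x : ℝ) : ℝ := (1 + (x - 1) * q) / (1 + (q - 1) * x)

/-- The deformed Witt operators: `D₀ f = (1+(x-1)q)(1+(q-1)x)·f'`,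
`Dₙ f = g_q^{n-1}·(1+(x-1)q)·x·f'` for `n ≥ 1`, and
`D₋ₙ f = (q/g_q)^{n-1}·(1+(q-1)x)·f'` for `n ≥ 1`. -/
noncomputable def DW (q : ℝ) (n : ℤ) (f : ℝ → ℝ) (x : ℝ) : ℝ :=
  if n = 0 then (1 + (x - 1) * q) * (1 + (q - 1) * x) * deriv f x
  else if 0 < n then gq q x ^ (n - 1).toNat * ((1 + (x - 1) * q) * x * deriv f x)
  else (q / gq q x) ^ (-n - 1).toNat * ((1 + (q - 1) * x) * deriv f x)

open Finset

theorem mul_pow_succ_eq_of_mul_eq {R : Type*} [CommRing R] {b g c r : R}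
    (h : b * g = c + r * b) (m : ℕ) :
    b * g ^ (m + 1) = c * ∑ k ∈ range (m + 1), r ^ k * g ^ (m - k) + r ^ (m + 1) * b := by
  have hgeom := geom_sum₂_mul r g (m + 1)
  rw [Nat.add_sub_cancel] at hgeom
  linear_combination b * hgeom + (∑ k ∈ range (m + 1), r ^ k * g ^ (m - k)) * h

theorem nat_mul_pow_sub_one_mul {R : Type*} [CommSemiring R] (a : R) (m : ℕ) :
    (m : R) * a ^ (m - 1) * a = m * a ^ m := by
  cases m with
  | zero => simp
  | succ m => rw [Nat.add_sub_cancel, pow_succ, mul_assoc]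

theorem mul_deriv_mul_sub_mul_deriv_mul {a b φ : ℝ → ℝ} {x : ℝ} (ha : DifferentiableAt ℝ a x)
    (hb : DifferentiableAt ℝ b x) (hφ : DifferentiableAt ℝ φ x) :
    a x * deriv (fun y => b y * φ y) x - b x * deriv (fun y => a y * φ y) x
      = (a x * deriv b x - b x * deriv a x) * φ x := by
  rw [deriv_fun_mul hb hφ, deriv_fun_mul ha hφ]
  ring

section WittCoefficients

variable (q : ℝ)

def wittCoeffZero (y : ℝ) : ℝ := (1 + (y - 1) * q) * (1 + (q - 1) * y)

/-- The coefficient of `D_{m+1}`. -/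
noncomputable def wittCoeffSucc (m : ℕ) (y : ℝ) : ℝ := gq q y ^ m * ((1 + (y - 1) * q) * y)

theorem hasDerivAt_gq_num (x : ℝ) : HasDerivAt (fun y : ℝ => 1 + (y - 1) * q) q x := by
  simpa using (((hasDerivAt_id x).sub_const 1).mul_const q).const_add 1

theorem hasDerivAt_gq_den (x : ℝ) : HasDerivAt (fun y : ℝ => 1 + (q - 1) * y) (q - 1) x := by
  simpa using ((hasDerivAt_id x).const_mul (q - 1)).const_add 1

theorem hasDerivAt_wittCoeffZero (x : ℝ) :
    HasDerivAt (wittCoeffZero q) (q * (1 + (q - 1) * x) + (1 + (x - 1) * q) * (q - 1)) x :=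
  (hasDerivAt_gq_num q x).fun_mul (hasDerivAt_gq_den q x)

variable {q}

theorem DW_zero (f : ℝ → ℝ) (y : ℝ) : DW q 0 f y = wittCoeffZero q y * deriv f y := by
  simp [DW, wittCoeffZero]

theorem DW_natCast_succ (m : ℕ) (f : ℝ → ℝ) (y : ℝ) :
    DW q ((m + 1 : ℕ) : ℤ) f y = wittCoeffSucc q m y * deriv f y := by
  rw [DW, if_neg (by omega), if_pos (by omega), wittCoeffSucc,
    show (((m + 1 : ℕ) : ℤ) - 1).toNat = m by omega]
  ring

theorem DW_natCast_succ_sub {m k : ℕ} (hk : k ≤ m) (f : ℝ → ℝ) (y : ℝ) :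
    DW q ((m + 1 : ℕ) - k : ℤ) f y = wittCoeffSucc q (m - k) y * deriv f y := by
  rw [show ((m + 1 : ℕ) : ℤ) - k = ((m - k + 1 : ℕ) : ℤ) by omega, DW_natCast_succ]

theorem hasDerivAt_gq {x : ℝ} (hx : 1 + (q - 1) * x ≠ 0) :
    HasDerivAt (gq q) ((q ^ 2 - q + 1) / (1 + (q - 1) * x) ^ 2) x :=
  ((hasDerivAt_gq_num q x).div (hasDerivAt_gq_den q x) hx).congr_deriv (by ring)

theorem hasDerivAt_wittCoeffSucc {x : ℝ} (hx : 1 + (q - 1) * x ≠ 0) (m : ℕ) :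
    HasDerivAt (wittCoeffSucc q m)
      (m * gq q x ^ (m - 1) * ((q ^ 2 - q + 1) / (1 + (q - 1) * x) ^ 2) * ((1 + (x - 1) * q) * x)
        + gq q x ^ m * (q * x + (1 + (x - 1) * q))) x :=
  (((hasDerivAt_gq hx).fun_pow m).fun_mul
    ((hasDerivAt_gq_num q x).fun_mul (hasDerivAt_id' x))).congr_deriv (by ring)

theorem gq_mul_den {x : ℝ} (hx : 1 + (q - 1) * x ≠ 0) :
    gq q x * (1 + (q - 1) * x) = 1 + (x - 1) * q :=
  div_mul_cancel₀ _ hx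

theorem wittCoeff_bracket_eq {x : ℝ} (hx : 1 + (q - 1) * x ≠ 0) (m : ℕ) :
    wittCoeffZero q x * deriv (wittCoeffSucc q m) x
        - wittCoeffSucc q m x * deriv (wittCoeffZero q) x
      = m * (q ^ 2 - q + 1) * wittCoeffSucc q m x + gq q x ^ m * (1 + (x - 1) * q) ^ 2 := by
  rw [(hasDerivAt_wittCoeffSucc hx m).deriv, (hasDerivAt_wittCoeffZero q x).deriv,
    wittCoeffZero, wittCoeffSucc, ← gq_mul_den hx]
  field_simp
  linear_combination (q ^ 2 - q + 1) * x * gq q x * nat_mul_pow_sub_one_mul (gq q x) m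

theorem gq_pow_mul_sq_eq {x : ℝ} (hx : 1 + (q - 1) * x ≠ 0) (m : ℕ) :
    gq q x ^ m * (1 + (x - 1) * q) ^ 2
      = (q ^ 2 - q + 1) * wittCoeffSucc q m x
        + (q ^ 2 - q + 1) * ∑ k ∈ Icc 1 m, (1 - q) ^ k * wittCoeffSucc q (m - k) x
        + (1 - q) ^ (m + 1) * wittCoeffZero q x := by
  have hg := gq_mul_den hx
  have hrec : (1 + (q - 1) * x) * gq q x
      = (q ^ 2 - q + 1) * x + (1 - q) * (1 + (q - 1) * x) := by
    linear_combination hg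
  have hgeom := mul_pow_succ_eq_of_mul_eq hrec m
  rw [range_eq_Ico, sum_eq_sum_Ico_succ_bot (by omega), Ico_add_one_right_eq_Icc] at hgeom
  simp only [wittCoeffSucc, wittCoeffZero, ← mul_assoc, ← sum_mul]
  linear_combination (1 + (x - 1) * q) * hgeom - gq q x ^ m * (1 + (x - 1) * q) * hg

end WittCoefficients

/-- The deformed Witt bracket `[D₀, Dₙ]`. -/
theorem deformed_witt_D0_Dn (q : ℝ) (n : ℕ) (hn : 1 ≤ n) (f : ℝ → ℝ)
    (hf : ContDiff ℝ 2 f) (x : ℝ) (hx : 1 + (q - 1) * x ≠ 0) :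
    DW q 0 (fun y => DW q n f y) x - DW q n (fun y => DW q 0 f y) x
      = (n : ℝ) * (q ^ 2 - q + 1) * DW q n f x
        + (q ^ 2 - q + 1) *
            ∑ k ∈ Finset.Icc 1 (n - 1), (1 - q) ^ k * DW q ((n : ℤ) - k) f x
        + (1 - q) ^ n * DW q 0 f x := by
  obtain ⟨m, rfl⟩ : ∃ m, n = m + 1 := ⟨n - 1, by omega⟩
  have hsum : ∑ k ∈ Icc 1 (m + 1 - 1), (1 - q) ^ k * DW q ((m + 1 : ℕ) - k : ℤ) f x
      = (∑ k ∈ Icc 1 m, (1 - q) ^ k * wittCoeffSucc q (m - k) x) * deriv f x := by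
    rw [Nat.add_sub_cancel, sum_mul]
    refine sum_congr rfl fun k hk => ?_
    rw [DW_natCast_succ_sub (mem_Icc.1 hk).2, mul_assoc]
  simp only [DW_zero, DW_natCast_succ, hsum]
  rw [mul_deriv_mul_sub_mul_deriv_mul (hasDerivAt_wittCoeffZero q x).differentiableAt
      (hasDerivAt_wittCoeffSucc hx m).differentiableAt (hf.differentiable_deriv_two x),
    wittCoeff_bracket_eq hx, gq_pow_mul_sq_eq hx]
  push_cast
  ring
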